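/- arXiv:2101.03402 — 3 statements merged into one kernel-verified Lean document; each statement's English description precedes it below -/
import Mathlib

section
/- Let (a_n)_{n≥1} and (c_n)_{n≥1} be sequences of positive real numbers. Suppose there exist a sequence (θ_n) of real numbers and a constant θ > 1 with θ_n ≥ θ for all n ≥ 1, such that a_n/a_{n+1} > 1 + 1/n + (θ_n + c_{n+1})/(n·ln n) for all n ≥ 2. Then the series ∑ c_n a_n converges. -/
/-!
With `b n = n log n · a n`, the hypothesis gives, as soon as `1 + 1/n ≤ θ₀`,
the telescoping bound `c (n+1) a (n+1) ≤ b n - b (n+1)`: indeed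
`(n+1) log (n+1) ≤ n log n + log n + 1 + 1/n` because `log (1 + 1/n) ≤ 1/n`.
A nonnegative series dominated by the increments of a nonnegative decreasing
sequence converges.
-/

open Filter Real

theorem summable_of_le_sub_succ {f b : ℕ → ℝ} (hf : ∀ n, 0 ≤ f n) (hb : ∀ n, 0 ≤ b n)
    (h : ∀ n, f n ≤ b n - b (n + 1)) : Summable f := by
  refine summable_of_sum_range_le hf (c := b 0) fun k => ?_
  calc ∑ i ∈ Finset.range k, f i ≤ ∑ i ∈ Finset.range k, (b i - b (i + 1)) :=
        Finset.sum_le_sum fun i _ => h i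
    _ = b 0 - b k := Finset.sum_range_sub' b k
    _ ≤ b 0 := sub_le_self _ (hb k)

theorem summable_of_eventually_le_sub_succ {f b : ℕ → ℝ} (hf : ∀ᶠ n in atTop, 0 ≤ f n)
    (hb : ∀ᶠ n in atTop, 0 ≤ b n) (h : ∀ᶠ n in atTop, f n ≤ b n - b (n + 1)) :
    Summable f := by
  obtain ⟨N, hN⟩ := (hf.and (hb.and h)).exists_forall_of_atTop
  rw [← summable_nat_add_iff N]
  refine summable_of_le_sub_succ (b := fun n => b (n + N)) (fun n => (hN _ le_add_self).1)
    (fun n => (hN _ le_add_self).2.1) fun n => ?_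
  simpa only [add_right_comm n 1 N] using (hN _ le_add_self).2.2

theorem Real.add_one_mul_log_add_one_le {x : ℝ} (hx : 0 < x) :
    (x + 1) * log (x + 1) ≤ x * log x + log x + (1 + 1 / x) := by
  have hlog : log (x + 1) ≤ log x + 1 / x := by
    have := log_le_sub_one_of_pos (by positivity : 0 < (x + 1) / x)
    rw [log_div (by positivity) hx.ne', add_div, div_self hx.ne'] at this
    linarith
  calc (x + 1) * log (x + 1) ≤ (x + 1) * (log x + 1 / x) := by gcongr
    _ = x * log x + log x + (1 + 1 / x) := by field_simp

theorem bertrand_step_le {x p q t c : ℝ} (hx : 1 < x) (hq : 0 < q) (ht : 1 + 1 / x ≤ t)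
    (h : p / q > 1 + 1 / x + (t + c) / (x * log x)) :
    c * q ≤ x * log x * p - (x + 1) * log (x + 1) * q := by
  have hlog : 0 < log x := log_pos hx
  have hxlog : 0 < x * log x := mul_pos (by linarith) hlog
  have hratio : (x * log x + log x + t + c) * q < x * log x * p := by
    rw [gt_iff_lt, lt_div_iff₀ hq] at h
    calc (x * log x + log x + t + c) * q
        = x * log x * ((1 + 1 / x + (t + c) / (x * log x)) * q) := by
          field_simp [hlog.ne']; ring
      _ < x * log x * p := by gcongr
  have hcoef := mul_le_mul_of_nonneg_right (add_one_mul_log_add_one_le (by linarith : 0 < x)) hq.le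
  nlinarith [mul_le_mul_of_nonneg_right ht hq.le]

/-- Generalized Bertrand test, convergence part. -/
theorem bertrand_mul_convergence (a c : ℕ → ℝ) (ha : ∀ n, 1 ≤ n → 0 < a n)
    (hc : ∀ n, 1 ≤ n → 0 < c n) (θ : ℕ → ℝ) (θ₀ : ℝ) (hθ₀ : 1 < θ₀)
    (hθ : ∀ n, 1 ≤ n → θ₀ ≤ θ n)
    (h : ∀ n, 2 ≤ n → a n / a (n + 1) >
      1 + 1 / (n : ℝ) + (θ n + c (n + 1)) / ((n : ℝ) * Real.log n)) :
    Summable (fun n : ℕ => c (n + 1) * a (n + 1)) := by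
  have hsmall : ∀ᶠ n : ℕ in atTop, 1 / (n : ℝ) < θ₀ - 1 :=
    tendsto_one_div_atTop_nhds_zero_nat.eventually (gt_mem_nhds (by linarith))
  refine summable_of_eventually_le_sub_succ (b := fun n => n * log n * a n) ?_ ?_ ?_
  · exact Eventually.of_forall fun n => (mul_pos (hc _ le_add_self) (ha _ le_add_self)).le
  · filter_upwards [eventually_ge_atTop 1] with n hn
    exact mul_nonneg (mul_nonneg n.cast_nonneg (log_natCast_nonneg n)) (ha n hn).le
  · filter_upwards [hsmall, eventually_ge_atTop 2] with n hn hn2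
    have hx : (1 : ℝ) < n := by exact_mod_cast hn2
    have := bertrand_step_le hx (ha _ le_add_self) (by linarith [hθ n (by omega)]) (h n hn2)
    push_cast
    linarith
end

section
/- Let (a_n)_{n≥1} and (c_n)_{n≥1} be sequences of positive real numbers. Suppose there exist a sequence (θ_n) of real numbers and a constant θ < 1 with θ_n ≤ θ for all n ≥ 1, such that a_n/a_{n+1} ≤ 1 + 1/n + (θ_n − c_{n+1})/(n·ln n) for all n ≥ 2, and suppose the series ∑ c_n/(n·ln n) diverges. Then the series ∑ c_n a_n diverges. -/
/-!
Multiplying the hypothesis by `n log n · a (n + 1)` gives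
`n log n · a n ≤ ((n + 1) log n + θ n - c (n + 1)) · a (n + 1)`, and since
`θ n - c (n + 1) < 1 ≤ (n + 1) (log (n + 1) - log n)`, the sequence `n log n · a n` is
nondecreasing from `n = 2` on, hence bounded below by some `K > 0`. Then
`c n / (n log n) ≤ c n a n / K`, so the divergence of `∑ c n / (n log n)` forces that of
`∑ c n a n`.
-/

open Real Filter

lemma one_le_add_one_mul_log_add_one_sub_log {x : ℝ} (hx : 0 < x) :
    1 ≤ (x + 1) * (log (x + 1) - log x) := by
  have h := one_sub_inv_le_log_of_pos (div_pos (by linarith : 0 < x + 1) hx)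
  rw [inv_div, log_div (by positivity) hx.ne'] at h
  have hsub : 1 - x / (x + 1) = 1 / (x + 1) := by field_simp; ring
  rw [hsub, div_le_iff₀ (by positivity)] at h
  linarith

lemma mul_log_mul_le_of_div_le {x a₀ a₁ s : ℝ} (hx : 1 < x) (ha₁ : 0 < a₁) (hs : s ≤ 1)
    (h : a₀ / a₁ ≤ 1 + 1 / x + s / (x * log x)) :
    x * log x * a₀ ≤ (x + 1) * log (x + 1) * a₁ := by
  have hlogx : 0 < log x := log_pos hx
  have hexpand : x * log x * (1 + 1 / x + s / (x * log x)) = (x + 1) * log x + s := by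
    field_simp
  have hlog := one_le_add_one_mul_log_add_one_sub_log (by linarith : 0 < x)
  calc x * log x * a₀ ≤ x * log x * ((1 + 1 / x + s / (x * log x)) * a₁) := by
        gcongr
        exact (div_le_iff₀ ha₁).mp h
    _ = ((x + 1) * log x + s) * a₁ := by rw [← mul_assoc, hexpand]
    _ ≤ (x + 1) * log (x + 1) * a₁ := by gcongr; linarith

lemma Summable.div_of_le_mul {w a c : ℕ → ℝ} {K : ℝ} (hK : 0 < K)
    (hs : Summable fun n => c n * a n) (hc : ∀ᶠ n in atTop, 0 ≤ c n)
    (hw : ∀ᶠ n in atTop, 0 < w n) (hwa : ∀ᶠ n in atTop, K ≤ w n * a n) :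
    Summable fun n => c n / w n := by
  refine (hs.div_const K).of_norm_bounded_eventually_nat ?_
  filter_upwards [hc, hw, hwa] with n hcn hwn hwan
  rw [norm_of_nonneg (div_nonneg hcn hwn.le), div_le_div_iff₀ hwn hK]
  nlinarith [mul_le_mul_of_nonneg_left hwan hcn]

/-- Generalized Bertrand test, divergence part. -/
theorem bertrand_mul_divergence (a c : ℕ → ℝ) (ha : ∀ n, 1 ≤ n → 0 < a n)
    (hc : ∀ n, 1 ≤ n → 0 < c n) (θ : ℕ → ℝ) (θ₀ : ℝ) (hθ₀ : θ₀ < 1)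
    (hθ : ∀ n, 1 ≤ n → θ n ≤ θ₀)
    (h : ∀ n, 2 ≤ n → a n / a (n + 1) ≤
      1 + 1 / (n : ℝ) + (θ n - c (n + 1)) / ((n : ℝ) * Real.log n))
    (hcdiv : ¬ Summable (fun n : ℕ => c (n + 1) / ((n + 1 : ℝ) * Real.log (n + 1)))) :
    ¬ Summable (fun n : ℕ => c (n + 1) * a (n + 1)) := by
  intro hS
  apply hcdiv
  set D : ℕ → ℝ := fun n => n * log n * a n
  have hstep : ∀ n ≥ 2, D n ≤ D (n + 1) := fun n hn => by
    simp only [D]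
    push_cast
    exact mul_log_mul_le_of_div_le (Nat.one_lt_cast.mpr hn) (ha _ (by omega))
      (by linarith [hθ n (by omega), hc (n + 1) (by omega)]) (h n hn)
  have hlower : ∀ n ≥ 2, D 2 ≤ D n := fun n hn =>
    monotoneOn_nat_Ici_of_le_succ hstep (Set.mem_Ici.2 le_rfl) (Set.mem_Ici.2 hn) hn
  have hD2 : 0 < D 2 := by
    simpa [D] using mul_pos (mul_pos two_pos (log_pos one_lt_two)) (ha 2 (by omega))
  refine hS.div_of_le_mul hD2 ?_ ?_ ?_ <;> filter_upwards [eventually_ge_atTop 1] with n hn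
  · exact (hc _ (by omega)).le
  · exact mul_pos (by positivity) (log_pos (by norm_cast; omega))
  · simpa [D] using hlower (n + 1) (by omega)
end

section
/- Let (a_n)_{n≥1} be a decreasing sequence of positive real numbers. Then the series ∑ a_n converges if and only if there exists a sequence (q_n)_{n≥1} of positive real numbers such that q_n − 2·q_{n+1} ≥ 2·a_{2^{n+1}} for all sufficiently large n. -/
/-!
Substituting `Q n = 2 ^ n * q n` turns the condition into `Q n - Q (n + 1) ≥ 2 ^ (n + 1) * a (2 ^ (n + 1))`,
a telescoping bound for the condensed series `∑ 2 ^ k * a (2 ^ k)`. Such a `Q`, bounded below, bounds the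
partial sums of the condensed series; conversely `1 +` its tail sums is such a `Q`. Cauchy condensation
transfers summability between the condensed series and `∑ a n`.
-/

open Filter

theorem summable_of_le_sub_succ_s17 {b Q : ℕ → ℝ} (hb : ∀ n, 0 ≤ b n) (hQ : ∀ᶠ n in atTop, 0 ≤ Q n)
    (hbQ : ∀ᶠ n in atTop, b n ≤ Q n - Q (n + 1)) : Summable b := by
  obtain ⟨N, hN⟩ := eventually_atTop.1 (hQ.and hbQ)
  rw [← summable_nat_add_iff N]
  refine summable_of_sum_range_le (c := Q N) (fun n => hb _) fun m => ?_
  calc ∑ i ∈ Finset.range m, b (i + N)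
      ≤ ∑ i ∈ Finset.range m, (Q (i + N) - Q (i + 1 + N)) :=
        Finset.sum_le_sum fun i _ => by simpa [add_right_comm] using (hN (i + N) (by omega)).2
    _ = Q N - Q (m + N) := by simpa using Finset.sum_range_sub' (fun i => Q (i + N)) m
    _ ≤ Q N := sub_le_self _ (hN _ (by omega)).1

theorem Summable.exists_pos_sub_succ_eq {b : ℕ → ℝ} (hb : ∀ n, 0 ≤ b n) (hs : Summable b) :
    ∃ Q : ℕ → ℝ, (∀ n, 0 < Q n) ∧ ∀ n, Q n - Q (n + 1) = b n := by
  refine ⟨fun n => 1 + ∑' k, b (k + n),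
    fun n => add_pos_of_pos_of_nonneg one_pos (tsum_nonneg fun k => hb _), fun n => ?_⟩
  dsimp only
  rw [((summable_nat_add_iff n).2 hs).tsum_eq_zero_add]
  simp [add_right_comm, add_assoc]

theorem summable_succ_iff_summable_condensed_succ {f : ℕ → ℝ} (h_nonneg : 0 ≤ᶠ[atTop] f)
    (h_mono : ∀ᶠ n in atTop, f (n + 1) ≤ f n) :
    Summable (fun n => f (n + 1)) ↔ Summable fun n => (2 : ℝ) ^ (n + 1) * f (2 ^ (n + 1)) := by
  rw [summable_nat_add_iff 1, summable_nat_add_iff 1 (f := fun n => (2 : ℝ) ^ n * f (2 ^ n)),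
    summable_condensed_iff_of_eventually_nonneg h_nonneg h_mono]

theorem two_mul_le_sub_two_mul_succ_iff (q : ℕ → ℝ) (x : ℝ) (n : ℕ) :
    2 * x ≤ q n - 2 * q (n + 1) ↔ 2 ^ (n + 1) * x ≤ 2 ^ n * q n - 2 ^ (n + 1) * q (n + 1) := by
  rw [← mul_le_mul_iff_of_pos_left (pow_pos two_pos n)]
  ring_nf

/-- Condensation-type characterization of convergence via the extended Kummer test. -/
theorem condensation_kummer (a : ℕ → ℝ) (ha : ∀ n, 1 ≤ n → 0 < a n)
    (hdec : ∀ n, 1 ≤ n → a (n + 1) ≤ a n) :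
    Summable (fun n : ℕ => a (n + 1)) ↔
      ∃ q : ℕ → ℝ, (∀ n, 1 ≤ n → 0 < q n) ∧
        ∃ N : ℕ, ∀ n, N ≤ n → q n - 2 * q (n + 1) ≥ 2 * a (2 ^ (n + 1)) := by
  have h_condensed_nonneg (n : ℕ) : 0 ≤ (2 : ℝ) ^ (n + 1) * a (2 ^ (n + 1)) :=
    mul_nonneg (by positivity) (ha _ Nat.one_le_two_pow).le
  rw [summable_succ_iff_summable_condensed_succ (eventually_atTop.2 ⟨1, fun n hn => (ha n hn).le⟩)
    (eventually_atTop.2 ⟨1, hdec⟩)]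
  constructor
  · intro hs
    obtain ⟨Q, hQ, hQb⟩ := hs.exists_pos_sub_succ_eq h_condensed_nonneg
    refine ⟨fun n => Q n / 2 ^ n, fun n _ => div_pos (hQ n) (by positivity), 0, fun n _ => ?_⟩
    refine (two_mul_le_sub_two_mul_succ_iff (fun n => Q n / 2 ^ n) _ n).2 ?_
    rw [mul_div_cancel₀ _ (by positivity), mul_div_cancel₀ _ (by positivity), hQb]
  · rintro ⟨q, hq, N, hqN⟩
    refine summable_of_le_sub_succ_s17 (Q := fun n => 2 ^ n * q n) h_condensed_nonneg ?_ ?_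
    · filter_upwards [eventually_ge_atTop 1] with n hn using (mul_pos (by positivity) (hq n hn)).le
    · filter_upwards [eventually_ge_atTop N] with n hn
      exact (two_mul_le_sub_two_mul_succ_iff q _ n).1 (hqN n hn)
end
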